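/- arXiv:2111.12117 — 4 statements merged into one kernel-verified Lean document; each statement's English description precedes it below -/
import Mathlib

section
/- If L : Set → Set is a reflective (Bousfield) localisation functor, then either L is an equivalence or L inverts all surjective maps of sets. -/
open CategoryTheory

/-- If `L : Set → Set` is a reflective (Bousfield) localisation functor — i.e. a left
adjoint to the fully faithful inclusion of a reflective subcategory of `Set` — then
either `L` is an equivalence, or `L` inverts all surjective maps of sets. -/
theorem stmt0 {D : Type 1} [Category.{0} D] (L : Type ⥤ D) (ι : D ⥤ Type)
    [ι.Full] [ι.Faithful] (adj : L ⊣ ι) :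
    L.IsEquivalence ∨
      ∀ {A B : Type} (f : A ⟶ B), Function.Surjective f → IsIso (L.map f) := by
  classical
  by_cases hsub : ∀ (d : D) (u v : ι.obj d), u = v
  · -- every object of the subcategory is a subsingleton: L inverts surjections
    right
    intro A B f hf
    by_cases hB : Nonempty B
    · have hA : Nonempty A := ⟨(hf hB.some).choose⟩
      have hbij : Function.Bijective (ι.map (L.map f)) := by
        constructor
        · intro x y _; exact hsub _ x y
        · intro y; exact ⟨adj.unit.app A hA.some, hsub _ _ _⟩
      have : IsIso (ι.map (L.map f)) := (isIso_iff_bijective _).2 hbij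
      exact isIso_of_reflects_iso (L.map f) ι
    · -- B empty forces A empty, so f is already an iso
      have hbij : Function.Bijective f :=
        ⟨fun a b _ => (hB ⟨f a⟩).elim, fun b => (hB ⟨b⟩).elim⟩
      have : IsIso f := (isIso_iff_bijective f).2 hbij
      infer_instance
  · -- some object of the subcategory has two distinct points: L is an equivalence
    left
    push_neg at hsub
    obtain ⟨d, u, v, huv⟩ := hsub
    have hunit : ∀ X : Type, IsIso (adj.unit.app X) := by
      intro X
      rw [isIso_iff_bijective]
      constructor
      · intro a b hab
        by_contra hne
        let g : X ⟶ ι.obj d := TypeCat.ofHom fun x => if x = a then u else v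
        have hg : g = adj.unit.app X ≫ ι.map ((adj.homEquiv X d).symm g) :=
          ((adj.homEquiv X d).apply_symm_apply g).symm.trans (adj.homEquiv_unit _ _ _)
        have hgab : g a = g b := by
          rw [hg]
          show ι.map _ (adj.unit.app X a) = ι.map _ (adj.unit.app X b)
          rw [hab]
        have hga : g a = u := show (if a = a then u else v) = u from if_pos rfl
        have hgb : g b = v := show (if b = a then u else v) = v from if_neg (fun h => hne h.symm)
        exact huv (hga ▸ hgb ▸ hgab)
      · intro y
        by_contra hy
        push_neg at hy
        let h₁ : ι.obj (L.obj X) → ι.obj d := fun _ => u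
        let h₂ : ι.obj (L.obj X) → ι.obj d :=
          fun t => if ∃ x, adj.unit.app X x = t then u else v
        obtain ⟨φ₁, hφ₁⟩ := ι.map_surjective (TypeCat.ofHom h₁)
        obtain ⟨φ₂, hφ₂⟩ := ι.map_surjective (TypeCat.ofHom h₂)
        have heq : adj.homEquiv X d φ₁ = adj.homEquiv X d φ₂ := by
          rw [Adjunction.homEquiv_unit, Adjunction.homEquiv_unit, hφ₁, hφ₂]
          ext x
          show h₁ (adj.unit.app X x) = h₂ (adj.unit.app X x)
          have : h₂ (adj.unit.app X x) = u := if_pos ⟨x, rfl⟩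
          rw [this]
        have hφ : φ₁ = φ₂ := (adj.homEquiv X d).injective heq
        have h12 : h₁ y = h₂ y := by show (TypeCat.ofHom h₁) y = (TypeCat.ofHom h₂) y; rw [← hφ₁, ← hφ₂, hφ]
        have h2y : h₂ y = v := if_neg (fun ⟨x, hx⟩ => hy x hx)
        exact huv (by rw [← h2y]; exact h12)
    have hcounit : ∀ Y : D, IsIso (adj.counit.app Y) := fun Y => inferInstance
    exact adj.toEquivalence.isEquivalence_functor
end

section
/- A category I is sifted if and only if the colimit functor colim : (I ⥤ Type) ⥤ Type preserves finite products. -/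
open CategoryTheory CategoryTheory.Limits

universe u

namespace SiftedProofAux

variable {I : Type u} [SmallCategory I]

/-- External product of two type-valued functors. -/
@[simps]
def boxProd (F G : I ⥤ Type u) : I × I ⥤ Type u where
  obj p := F.obj p.1 × G.obj p.2
  map f := ↾(Prod.map (F.map f.1) (G.map f.2))

@[simps]
def fstNat (F G : I ⥤ Type u) : Functor.diag I ⋙ boxProd F G ⟶ F where
  app _ := ↾Prod.fst

@[simps]
def sndNat (F G : I ⥤ Type u) : Functor.diag I ⋙ boxProd F G ⟶ G where
  app _ := ↾Prod.snd

/-- The pointwise product fan on `F` and `G`. -/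
def pointwiseFan (F G : I ⥤ Type u) : BinaryFan F G :=
  BinaryFan.mk (fstNat F G) (sndNat F G)

/-- The pointwise product fan is a limit fan. -/
def pointwiseFanIsLimit (F G : I ⥤ Type u) : IsLimit (pointwiseFan F G) := by
  refine BinaryFan.isLimitMk
    (fun s => { app := fun i => ↾(fun x => (s.fst.app i x, s.snd.app i x)), naturality := ?_ })
    (fun s => rfl) (fun s => rfl) (fun s m h1 h2 => ?_)
  · intro i j f
    refine ConcreteCategory.hom_ext _ _ fun x => ?_
    have hf := ConcreteCategory.congr_hom (s.fst.naturality f) x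
    have hs := ConcreteCategory.congr_hom (s.snd.naturality f) x
    simp only [types_comp_apply] at hf hs ⊢
    exact Prod.ext hf hs
  · refine NatTrans.ext (funext fun i => ConcreteCategory.hom_ext _ _ fun x => ?_)
    have hf := ConcreteCategory.congr_hom (NatTrans.congr_app h1 i) x
    have hs := ConcreteCategory.congr_hom (NatTrans.congr_app h2 i) x
    simp only [pointwiseFan, BinaryFan.mk_fst, BinaryFan.mk_snd, NatTrans.comp_app,
      types_comp_apply] at hf hs
    exact Prod.ext hf hs

/-- The canonical cocone on `boxProd F G` with point `colimit F × colimit G`. -/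
noncomputable def boxProdCocone (F G : I ⥤ Type u) : Cocone (boxProd F G) where
  pt := colimit F × colimit G
  ι :=
    { app := fun p => ↾(fun x => (colimit.ι F p.1 x.1, colimit.ι G p.2 x.2))
      naturality := fun p q f => by
        refine ConcreteCategory.hom_ext _ _ fun x => ?_
        simp only [boxProd_obj, boxProd_map, types_comp_apply, Functor.const_obj_obj,
          Functor.const_obj_map, types_id_apply]
        exact Prod.ext (Types.colimit_sound f.1 rfl).symm (Types.colimit_sound f.2 rfl).symm }

lemma eqvGen_fst {F G : I ⥤ Type u} {p q : Σ i, F.obj i}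
    (h : Relation.EqvGen (F.ColimitTypeRel) p q) (j : I) (y : G.obj j) :
    colimit.ι (boxProd F G) (p.1, j) (p.2, y) = colimit.ι (boxProd F G) (q.1, j) (q.2, y) := by
  induction h with
  | rel p q h =>
    obtain ⟨f, hf⟩ := h
    exact Types.colimit_sound (F := boxProd F G) ((f, 𝟙 j) : (p.1, j) ⟶ (q.1, j))
      (by rw [hf]; exact Prod.ext rfl (by show G.map (𝟙 j) y = y; simp))
  | refl => rfl
  | symm _ _ _ ih => exact ih.symm
  | trans _ _ _ _ _ ih1 ih2 => exact ih1.trans ih2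

lemma eqvGen_snd {F G : I ⥤ Type u} {p q : Σ j, G.obj j}
    (h : Relation.EqvGen (G.ColimitTypeRel) p q) (i : I) (x : F.obj i) :
    colimit.ι (boxProd F G) (i, p.1) (x, p.2) = colimit.ι (boxProd F G) (i, q.1) (x, q.2) := by
  induction h with
  | rel p q h =>
    obtain ⟨f, hf⟩ := h
    exact Types.colimit_sound (F := boxProd F G) ((𝟙 i, f) : (i, p.1) ⟶ (i, q.1))
      (by rw [hf]; exact Prod.ext (by show F.map (𝟙 i) x = x; simp) rfl)
  | refl => rfl
  | symm _ _ _ ih => exact ih.symm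
  | trans _ _ _ _ _ ih1 ih2 => exact ih1.trans ih2

lemma boxProdDesc_bijective (F G : I ⥤ Type u) :
    Function.Bijective (colimit.desc (boxProd F G) (boxProdCocone F G)) := by
  have key : ∀ (i j : I) (x : F.obj i) (y : G.obj j),
      colimit.desc (boxProd F G) (boxProdCocone F G) (colimit.ι (boxProd F G) (i, j) (x, y)) =
        (colimit.ι F i x, colimit.ι G j y) := fun i j x y =>
    ConcreteCategory.congr_hom (colimit.ι_desc (boxProdCocone F G) (i, j)) ((x, y) : (boxProd F G).obj (i, j))
  constructor
  · intro u v huv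
    obtain ⟨⟨i, j⟩, ⟨x, y⟩, rfl⟩ := Types.jointly_surjective' u
    obtain ⟨⟨i', j'⟩, ⟨x', y'⟩, rfl⟩ := Types.jointly_surjective' v
    rw [key, key] at huv
    have h1 : colimit.ι F i x = colimit.ι F i' x' := congrArg Prod.fst huv
    have h2 : colimit.ι G j y = colimit.ι G j' y' := congrArg Prod.snd huv
    calc colimit.ι (boxProd F G) (i, j) (x, y)
        = colimit.ι (boxProd F G) (i', j) (x', y) :=
          eqvGen_fst (Types.colimit_eq h1) j y
      _ = colimit.ι (boxProd F G) (i', j') (x', y') :=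
          eqvGen_snd (Types.colimit_eq h2) i' x'
  · rintro ⟨a, b⟩
    obtain ⟨i, x, rfl⟩ := Types.jointly_surjective' a
    obtain ⟨j, y, rfl⟩ := Types.jointly_surjective' b
    exact ⟨colimit.ι (boxProd F G) (i, j) (x, y), key i j x y⟩

section Forward

variable [IsSifted I]

lemma preservesPair (F G : I ⥤ Type u) :
    PreservesLimit (pair F G) (colim : (I ⥤ Type u) ⥤ Type u) := by
  apply preservesLimit_of_preserves_limit_cone (pointwiseFanIsLimit F G)
  show IsLimit (colim.mapCone (BinaryFan.mk (fstNat F G) (sndNat F G)))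
  refine (isLimitMapConeBinaryFanEquiv colim (fstNat F G) (sndNat F G)).symm ?_
  let e : colimit (Functor.diag I ⋙ boxProd F G) ⟶ colimit F × colimit G :=
    colimit.pre (boxProd F G) (Functor.diag I) ≫ colimit.desc _ (boxProdCocone F G)
  have hd : IsIso (colimit.desc (boxProd F G) (boxProdCocone F G)) :=
    (isIso_iff_bijective _).2 (boxProdDesc_bijective F G)
  have he : IsIso e := by
    haveI : IsIso (colimit.pre (boxProd F G) (Functor.diag I)) := inferInstance
    exact @IsIso.comp_isIso _ _ _ _ _ _ _ this hd
  have hfst : e ≫ ↾_root_.Prod.fst = colim.map (fstNat F G) := by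
    apply colimit.hom_ext
    intro i
    refine ConcreteCategory.hom_ext _ _ fun z => ?_
    have hz : colimit.pre (boxProd F G) (Functor.diag I)
        (colimit.ι (Functor.diag I ⋙ boxProd F G) i z) = colimit.ι (boxProd F G) (i, i) z :=
      ConcreteCategory.congr_hom (colimit.ι_pre (boxProd F G) (Functor.diag I) i) z
    show _root_.Prod.fst (colimit.desc (boxProd F G) (boxProdCocone F G)
        (colimit.pre (boxProd F G) (Functor.diag I)
          (colimit.ι (Functor.diag I ⋙ boxProd F G) i z))) =
      colimMap (fstNat F G) (colimit.ι (Functor.diag I ⋙ boxProd F G) i z)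
    rw [hz, show colimit.desc (boxProd F G) (boxProdCocone F G)
        (colimit.ι (boxProd F G) (i, i) z) = (colimit.ι F i z.1, colimit.ι G i z.2) from
      ConcreteCategory.congr_hom (colimit.ι_desc (boxProdCocone F G) (i, i)) z]
    exact (ConcreteCategory.congr_hom (ι_colimMap (fstNat F G) i) z).symm
  have hsnd : e ≫ ↾_root_.Prod.snd = colim.map (sndNat F G) := by
    apply colimit.hom_ext
    intro i
    refine ConcreteCategory.hom_ext _ _ fun z => ?_
    have hz : colimit.pre (boxProd F G) (Functor.diag I)
        (colimit.ι (Functor.diag I ⋙ boxProd F G) i z) = colimit.ι (boxProd F G) (i, i) z :=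
      ConcreteCategory.congr_hom (colimit.ι_pre (boxProd F G) (Functor.diag I) i) z
    show _root_.Prod.snd (colimit.desc (boxProd F G) (boxProdCocone F G)
        (colimit.pre (boxProd F G) (Functor.diag I)
          (colimit.ι (Functor.diag I ⋙ boxProd F G) i z))) =
      colimMap (sndNat F G) (colimit.ι (Functor.diag I ⋙ boxProd F G) i z)
    rw [hz, show colimit.desc (boxProd F G) (boxProdCocone F G)
        (colimit.ι (boxProd F G) (i, i) z) = (colimit.ι F i z.1, colimit.ι G i z.2) from
      ConcreteCategory.congr_hom (colimit.ι_desc (boxProdCocone F G) (i, i)) z]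
    exact (ConcreteCategory.congr_hom (ι_colimMap (sndNat F G) i) z).symm
  refine IsLimit.ofIsoLimit (Types.binaryProductLimit (colimit F) (colimit G))
    (Cones.ext (asIso e).symm ?_)
  rintro ⟨⟨⟩⟩
  · simp only [Iso.symm_hom, asIso_inv]
    rw [eq_comm]
    exact (IsIso.inv_comp_eq (α := e)).2 hfst.symm
  · simp only [Iso.symm_hom, asIso_inv]
    rw [eq_comm]
    exact (IsIso.inv_comp_eq (α := e)).2 hsnd.symm

lemma preservesTerminalColim :
    PreservesLimit (Functor.empty.{0} (I ⥤ Type u)) (colim : (I ⥤ Type u) ⥤ Type u) := by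
  apply preservesTerminal_of_iso
  have hterm : IsTerminal (Types.constPUnitFunctor.{u} I) :=
    IsTerminal.ofUniqueHom (fun Y => { app := fun _ => ↾(fun _ => PUnit.unit) })
      (fun Y m => by refine NatTrans.ext (funext fun i => ConcreteCategory.hom_ext _ _ fun x => ?_); rfl)
  exact (HasColimit.isoOfNatIso (terminalIsTerminal.uniqueUpToIso hterm)) ≪≫
    Types.colimitConstPUnitIsoPUnit.{u} I ≪≫ Types.terminalIso.symm

lemma forward : PreservesFiniteProducts (colim : (I ⥤ Type u) ⥤ Type u) := by
  haveI : PreservesLimitsOfShape (Discrete WalkingPair) (colim : (I ⥤ Type u) ⥤ Type u) :=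
    ⟨fun {K} => by
      haveI := preservesPair (K.obj ⟨WalkingPair.left⟩) (K.obj ⟨WalkingPair.right⟩)
      exact preservesLimit_of_iso_diagram _ (diagramIsoPair K).symm⟩
  haveI := preservesTerminalColim (I := I)
  haveI : PreservesLimitsOfShape (Discrete PEmpty.{1}) (colim : (I ⥤ Type u) ⥤ Type u) :=
    preservesLimitsOfShape_pempty_of_preservesTerminal _
  exact PreservesFiniteProducts.of_preserves_binary_and_terminal _

end Forward

section Backward

lemma backward (h : PreservesFiniteProducts (colim : (I ⥤ Type u) ⥤ Type u)) : IsSifted I := by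
  haveI := h
  haveI : PreservesLimitsOfShape (Discrete PEmpty.{1}) (colim : (I ⥤ Type u) ⥤ Type u) :=
    inferInstance
  haveI : PreservesLimitsOfShape (Discrete WalkingPair) (colim : (I ⥤ Type u) ⥤ Type u) :=
    inferInstance
  -- nonempty
  have t : colim.obj (⊤_ (I ⥤ Type u)) ≅ ⊤_ (Type u) := PreservesTerminal.iso colim
  obtain ⟨i, -, -⟩ :=
    Types.jointly_surjective' (F := (⊤_ (I ⥤ Type u))) (t.inv (Types.terminalIso.inv PUnit.unit))
  haveI : Nonempty I := ⟨i⟩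
  -- final
  haveI : IsSiftedOrEmpty I := by
    apply Functor.final_of_colimit_comp_coyoneda_iso_pUnit
    rintro ⟨c₁, c₂⟩
    let A : I ⥤ Type u := coyoneda.obj (Opposite.op c₁)
    let B : I ⥤ Type u := coyoneda.obj (Opposite.op c₂)
    have iso1 : Functor.diag I ⋙ coyoneda.obj (Opposite.op (c₁, c₂)) ≅
        Functor.diag I ⋙ boxProd A B :=
      NatIso.ofComponents (fun i => Iso.refl _) (fun f => by ext; rfl)
    have iso2 : colim.obj (Functor.diag I ⋙ boxProd A B) ≅ colimit A × colimit B :=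
      (mapIsLimitOfPreservesOfIsLimit colim (fstNat A B) (sndNat A B)
        (pointwiseFanIsLimit A B)).conePointUniqueUpToIso
        (Types.binaryProductLimit (colimit A) (colimit B))
    have iso5 : colimit A ≅ PUnit := Coyoneda.colimitCoyonedaIso (Opposite.op c₁)
    have iso6 : colimit B ≅ PUnit := Coyoneda.colimitCoyonedaIso (Opposite.op c₂)
    exact HasColimit.isoOfNatIso iso1 ≪≫ iso2 ≪≫
      Equiv.toIso ((Equiv.prodCongr iso5.toEquiv iso6.toEquiv).trans (Equiv.punitProd _))
  exact ⟨⟩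

end Backward

end SiftedProofAux

/-- A category `I` is sifted if and only if the colimit functor
`colim : (I ⥤ Type) ⥤ Type` preserves finite products. -/
theorem stmt1 (I : Type u) [SmallCategory I] :
    IsSifted I ↔
      Nonempty (PreservesFiniteProducts (colim : (I ⥤ Type u) ⥤ Type u)) := by
  constructor
  · intro h
    exact ⟨SiftedProofAux.forward⟩
  · rintro ⟨h⟩
    exact SiftedProofAux.backward h
end

section
/- Let I admit a final idempotent with apex i, and let h : I ⥤ J be a final (cofinal) functor. Then J admits a final idempotent with apex h(i). -/
open CategoryTheory CategoryTheory.Limits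

/-- If `I` admits a final idempotent with apex `i` (a natural transformation
`id_I ⟹ const i`) and `h : I ⥤ J` is a final (cofinal) functor, then `J` admits
a final idempotent with apex `h i`. -/
theorem stmt17 {I : Type u₁} [Category.{v₁} I] {J : Type u₂} [Category.{v₂} J]
    (i : I) (σ : 𝟭 I ⟶ (Functor.const I).obj i) (h : I ⥤ J) [h.Final] :
    Nonempty (𝟭 J ⟶ (Functor.const J).obj (h.obj i)) :=
  -- `h` maps `σ` to a cocone over `h` with apex `h i`; since `h` is final, every cocone over `h`
  -- extends to a cocone over `𝟭 J` with the same apex.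
  ⟨((Functor.Final.extendCocone (F := h) (G := 𝟭 J)).obj
    ((Cocone.functoriality (𝟭 I) h).obj ⟨i, σ⟩)).ι⟩
end

section
/- Let I have a final idempotent at i, let p : J ⥤ I be a Grothendieck opfibration (co-Cartesian fibration), and suppose the fibre J_i over i admits a final idempotent at j. Then J admits a final idempotent at j. -/
open CategoryTheory

/-- Let `p : J ⥤ I` be a Grothendieck opfibration (modelled as the projection
`Grothendieck F ⥤ I` of the Grothendieck construction of `F : I ⥤ Cat`).
If `I` has a final idempotent at `i` (a natural transformation `id_I ⟹ const i`)
and the fibre `F i` over `i` admits a final idempotent at `j`, then the total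
category `Grothendieck F` admits a final idempotent at `(i, j)`. -/
theorem stmt18 {I : Type u₁} [Category.{v₁} I] (F : I ⥤ Cat.{v₂, u₂})
    (i : I) (σ : 𝟭 I ⟶ (Functor.const I).obj i)
    (j : F.obj i) (τ : 𝟭 (F.obj i) ⟶ (Functor.const (F.obj i)).obj j) :
    Nonempty (𝟭 (Grothendieck F) ⟶
      (Functor.const (Grothendieck F)).obj ⟨i, j⟩) := by
  refine ⟨{ app := fun X => ⟨σ.app X.base, τ.app ((F.map (σ.app X.base)).toFunctor.obj X.fiber)⟩,
            naturality := ?_ }⟩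
  intro X Y f
  have hbase : f.base ≫ σ.app Y.base = σ.app X.base := by
    simpa using σ.naturality f.base
  apply Grothendieck.ext
  case w_base =>
    simpa [Grothendieck.comp] using hbase
  case w_fiber =>
    have hτ := τ.naturality ((F.map (σ.app Y.base)).toFunctor.map f.fiber)
    simp only [Functor.id_map, Functor.const_obj_map, Category.comp_id] at hτ
    simp only [Grothendieck.comp_fiber, Functor.id_map, Functor.const_obj_map,
      Grothendieck.id_fiber, eqToHom_map, hτ]
    have h2 : (F.map (f.base ≫ σ.app Y.base)).toFunctor.obj X.fiber =
        (F.map (σ.app X.base)).toFunctor.obj X.fiber := by rw [hbase]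
    have h3 := τ.naturality (eqToHom h2)
    simp only [Functor.id_map, Functor.const_obj_map, Category.comp_id, eqToHom_map] at h3
    simp only [Grothendieck.id_base]
    rw [Functor.congr_hom (congrArg Cat.Hom.toFunctor (F.map_id i)) (τ.app ((F.map (σ.app X.base)).toFunctor.obj X.fiber))]
    simp only [Cat.id_eq_id, Functor.id_map, Category.comp_id] at h3 ⊢
    simp [← h3]
    have key : ∀ (a b : F.obj i) (h : a = b), eqToHom h ≫ τ.app b = τ.app a := by
      intro a b h; subst h; simp
    generalize_proofs
    simp [key]
end
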